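/- Let n ≥ 1 and let f : ℝⁿ → ℝ be bounded with |f(x)| ≤ M for some M > 0 and all x ∈ ℝⁿ. Then for all λ > 0, τ > 0 and all x ∈ ℝⁿ: 0 ≤ C^u_τ(C^l_λ(f))(x) − C^l_λ(f)(x) ≤ 16Mλ/τ and 0 ≤ C^u_λ(f)(x) − C^l_τ(C^u_λ(f))(x) ≤ 16Mλ/τ. In particular, for fixed λ the mixed transform C^u_τ(C^l_λ(f)) converges to C^l_λ(f) uniformly on ℝⁿ as τ → ∞. -/

import Mathlib

/-- Convex envelope: pointwise sup of affine minorants. -/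
noncomputable def convEnv {n : ℕ} (g : EuclideanSpace ℝ (Fin n) → ℝ)
    (x : EuclideanSpace ℝ (Fin n)) : ℝ :=
  sSup {a : ℝ | ∃ ℓ : EuclideanSpace ℝ (Fin n) →ᵃ[ℝ] ℝ, (∀ y, ℓ y ≤ g y) ∧ a = ℓ x}

/-- Lower compensated convex transform. -/
noncomputable def lowerT {n : ℕ} (lam : ℝ) (f : EuclideanSpace ℝ (Fin n) → ℝ)
    (x : EuclideanSpace ℝ (Fin n)) : ℝ :=
  convEnv (fun y => f y + lam * ‖y‖ ^ 2) x - lam * ‖x‖ ^ 2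

/-- Upper compensated convex transform. -/
noncomputable def upperT {n : ℕ} (lam : ℝ) (f : EuclideanSpace ℝ (Fin n) → ℝ)
    (x : EuclideanSpace ℝ (Fin n)) : ℝ :=
  lam * ‖x‖ ^ 2 - convEnv (fun y => lam * ‖y‖ ^ 2 - f y) x

/-!
Write `g = C^l_λ(f)` with `b ≤ f ≤ B`. Testing an affine minorant `ℓ` of `f + λ|·|²` at the
point `x + s (y - x)` (`s ≥ 1`), where `ℓ` is at most `B + λ|·|²`, and using that `ℓ` is affine
along the line through `x` and `y`, gives the one-sided semiconvexity estimate
`g y ≤ g x + (B - b) / s + λ (s - 1) |y - x|²`.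
Choosing `s = max 1 (τ / λ)`, the tangent paraboloid `y ↦ τ|y|² - g x - (B - b) λ / τ - τ|y - x|²`
of slope `τ` at `x` is then an affine minorant of `τ|·|² - g`, so `C^u_τ(g)` exceeds `g` by at
most `(B - b) λ / τ`. The estimate for `C^l_τ(C^u_λ(f))` is the same one applied to `-f`, since
`C^u_λ(f) = -C^l_λ(-f)`.
-/

section ParaboloidTangent

variable {F : Type*} [NormedAddCommGroup F] [InnerProductSpace ℝ F]

/-- The affine map tangent at `x₀` to the paraboloid `y ↦ t * ‖y‖ ^ 2 + c`. -/
noncomputable def paraboloidTangent (t : ℝ) (x₀ : F) (c : ℝ) : F →ᵃ[ℝ] ℝ :=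
  ((2 * t) • innerₛₗ ℝ x₀).toAffineMap + AffineMap.const ℝ F (c - t * ‖x₀‖ ^ 2)

theorem paraboloidTangent_apply (t : ℝ) (x₀ : F) (c : ℝ) (y : F) :
    paraboloidTangent t x₀ c y = t * ‖y‖ ^ 2 + c - t * ‖y - x₀‖ ^ 2 := by
  simp only [paraboloidTangent, AffineMap.coe_add, LinearMap.coe_toAffineMap, LinearMap.coe_smul,
    coe_innerₛₗ_apply, AffineMap.coe_const, Pi.add_apply, Pi.smul_apply, smul_eq_mul,
    Function.const_apply, norm_sub_sq_real, real_inner_comm x₀ y]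
  ring

theorem norm_lineMap_sq (x y : F) (s : ℝ) :
    ‖AffineMap.lineMap x y s‖ ^ 2 =
      (1 - s) * ‖x‖ ^ 2 + s * ‖y‖ ^ 2 + s * (s - 1) * ‖y - x‖ ^ 2 := by
  rw [AffineMap.lineMap_apply_module', norm_add_sq_real, norm_smul, mul_pow, Real.norm_eq_abs,
    sq_abs, inner_smul_left, RCLike.conj_to_real, show y = (y - x) + x by abel, norm_add_sq_real]
  simp only [add_sub_cancel_right]
  ring

end ParaboloidTangent

section ConvexEnvelope

variable {n : ℕ} {g : EuclideanSpace ℝ (Fin n) → ℝ} {ℓ : EuclideanSpace ℝ (Fin n) →ᵃ[ℝ] ℝ}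
  {x : EuclideanSpace ℝ (Fin n)}

theorem le_convEnv (hℓ : ∀ y, ℓ y ≤ g y) : ℓ x ≤ convEnv g x :=
  le_csSup ⟨g x, by rintro _ ⟨ℓ', hℓ', rfl⟩; exact hℓ' x⟩ ⟨ℓ, hℓ, rfl⟩

theorem convEnv_le {C : ℝ} (hℓ : ∀ y, ℓ y ≤ g y)
    (h : ∀ ℓ' : EuclideanSpace ℝ (Fin n) →ᵃ[ℝ] ℝ, (∀ y, ℓ' y ≤ g y) → ℓ' x ≤ C) :
    convEnv g x ≤ C :=
  csSup_le ⟨_, ℓ, hℓ, rfl⟩ (by rintro _ ⟨ℓ', hℓ', rfl⟩; exact h ℓ' hℓ')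

theorem convEnv_le_self (hℓ : ∀ y, ℓ y ≤ g y) : convEnv g x ≤ g x :=
  convEnv_le hℓ fun _ h => h x

end ConvexEnvelope

section CompensatedTransforms

variable {n : ℕ}

theorem upperT_eq_neg_lowerT_neg (t : ℝ) (f : EuclideanSpace ℝ (Fin n) → ℝ)
    (x : EuclideanSpace ℝ (Fin n)) : upperT t f x = -lowerT t (fun y => -f y) x := by
  simp only [upperT, lowerT, neg_add_eq_sub, neg_sub]

theorem lowerT_neg (t : ℝ) (f : EuclideanSpace ℝ (Fin n) → ℝ) (x : EuclideanSpace ℝ (Fin n)) :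
    lowerT t (fun y => -f y) x = -upperT t f x := by
  rw [upperT_eq_neg_lowerT_neg, neg_neg]

theorem upperT_mem_Icc_of_le_add {g : EuclideanSpace ℝ (Fin n) → ℝ} {τ ε : ℝ}
    {x : EuclideanSpace ℝ (Fin n)} (h : ∀ y, g y ≤ g x + ε + τ * ‖y - x‖ ^ 2) :
    upperT τ g x ∈ Set.Icc (g x) (g x + ε) := by
  have hℓ : ∀ y, paraboloidTangent τ x (-g x - ε) y ≤ τ * ‖y‖ ^ 2 - g y := fun y => by
    rw [paraboloidTangent_apply]; linarith [h y]
  have hlow := le_convEnv (x := x) hℓ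
  have hupp := convEnv_le_self (x := x) hℓ
  rw [paraboloidTangent_apply, sub_self, norm_zero] at hlow
  constructor <;> · unfold upperT; linarith

variable {f : EuclideanSpace ℝ (Fin n) → ℝ} {b B lam : ℝ}

theorem paraboloidTangent_le_add (hb : ∀ y, b ≤ f y) (hlam : 0 ≤ lam)
    (x y : EuclideanSpace ℝ (Fin n)) : paraboloidTangent lam x b y ≤ f y + lam * ‖y‖ ^ 2 := by
  rw [paraboloidTangent_apply]
  nlinarith [hb y, sq_nonneg ‖y - x‖]

theorem le_lowerT (hb : ∀ y, b ≤ f y) (hlam : 0 ≤ lam) (x : EuclideanSpace ℝ (Fin n)) :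
    b ≤ lowerT lam f x := by
  have := le_convEnv (x := x) (paraboloidTangent_le_add hb hlam x)
  rw [paraboloidTangent_apply, sub_self, norm_zero] at this
  unfold lowerT; linarith

theorem lowerT_le_lowerT_add (hb : ∀ y, b ≤ f y) (hB : ∀ y, f y ≤ B) (hlam : 0 ≤ lam) {s : ℝ}
    (hs : 1 ≤ s) (x y : EuclideanSpace ℝ (Fin n)) :
    lowerT lam f y ≤ lowerT lam f x + (B - b) / s + lam * (s - 1) * ‖y - x‖ ^ 2 := by
  have hgx := le_lowerT hb hlam x
  suffices convEnv (fun z => f z + lam * ‖z‖ ^ 2) y ≤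
      lowerT lam f x + (B - b) / s + lam * (s - 1) * ‖y - x‖ ^ 2 + lam * ‖y‖ ^ 2 by
    simp only [lowerT] at this ⊢; linarith
  refine convEnv_le (paraboloidTangent_le_add hb hlam x) fun ℓ hℓ => ?_
  have hx : ℓ x ≤ lowerT lam f x + lam * ‖x‖ ^ 2 := by
    have := le_convEnv (x := x) hℓ
    simp only [lowerT]; linarith
  have hz : ℓ (AffineMap.lineMap x y s) ≤ B + lam * ‖AffineMap.lineMap x y s‖ ^ 2 :=
    (hℓ _).trans (by linarith [hB (AffineMap.lineMap x y s)])
  rw [AffineMap.apply_lineMap, AffineMap.lineMap_apply_ring, norm_lineMap_sq] at hz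
  have hsx := mul_le_mul_of_nonneg_left hx (sub_nonneg.2 hs)
  have hy : ℓ y - lowerT lam f x - lam * (s - 1) * ‖y - x‖ ^ 2 - lam * ‖y‖ ^ 2 ≤ (B - b) / s := by
    rw [le_div_iff₀' (by linarith)]
    linarith
  linarith

theorem upperT_lowerT_mem_Icc (hb : ∀ y, b ≤ f y) (hB : ∀ y, f y ≤ B) (hlam : 0 < lam) {τ : ℝ}
    (hτ : 0 < τ) (x : EuclideanSpace ℝ (Fin n)) :
    upperT τ (lowerT lam f) x ∈
      Set.Icc (lowerT lam f x) (lowerT lam f x + (B - b) * lam / τ) := by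
  set s := max 1 (τ / lam)
  have hτs : τ / lam ≤ s := le_max_right _ _
  have hslope : lam * (s - 1) ≤ τ := by
    have : s ≤ 1 + τ / lam := max_le (by linarith [div_pos hτ hlam]) (by linarith)
    calc lam * (s - 1) ≤ lam * (τ / lam) := by gcongr; linarith
      _ = τ := mul_div_cancel₀ τ hlam.ne'
  have hgap : (B - b) / s ≤ (B - b) * lam / τ := by
    rw [← div_div_eq_mul_div]
    exact div_le_div_of_nonneg_left (by linarith [hb 0, hB 0]) (div_pos hτ hlam) hτs
  refine upperT_mem_Icc_of_le_add fun y => ?_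
  calc lowerT lam f y ≤ lowerT lam f x + (B - b) / s + lam * (s - 1) * ‖y - x‖ ^ 2 :=
        lowerT_le_lowerT_add hb hB hlam.le (le_max_left _ _) x y
    _ ≤ lowerT lam f x + (B - b) * lam / τ + τ * ‖y - x‖ ^ 2 := by gcongr

end CompensatedTransforms

theorem tendstoUniformly_of_dist_le {ι α β : Type*} [PseudoMetricSpace β] {p : Filter ι}
    {F : ι → α → β} {f : α → β} {r : ι → ℝ} (hr : Filter.Tendsto r p (nhds 0))
    (h : ∀ᶠ i in p, ∀ x, dist (f x) (F i x) ≤ r i) : TendstoUniformly F f p :=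
  Metric.tendstoUniformly_iff.2 fun _ hε =>
    (h.and (hr.eventually (gt_mem_nhds hε))).mono fun _ hi x => (hi.1 x).trans_lt hi.2

theorem mixed_transform_estimates_general (n : ℕ)
    (f : EuclideanSpace ℝ (Fin n) → ℝ) (M : ℝ) (hf : ∀ x, |f x| ≤ M)
    (lam : ℝ) (hlam : 0 < lam) :
    (∀ tau : ℝ, 0 < tau → ∀ x,
      (0 ≤ upperT tau (lowerT lam f) x - lowerT lam f x ∧
        upperT tau (lowerT lam f) x - lowerT lam f x ≤ 16 * M * lam / tau) ∧
      (0 ≤ upperT lam f x - lowerT tau (fun y => upperT lam f y) x ∧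
        upperT lam f x - lowerT tau (fun y => upperT lam f y) x ≤ 16 * M * lam / tau)) ∧
    TendstoUniformly (fun (tau : ℝ) (x : EuclideanSpace ℝ (Fin n)) =>
        upperT tau (lowerT lam f) x)
      (fun x => lowerT lam f x) Filter.atTop := by
  have hM : 0 ≤ M := (abs_nonneg _).trans (hf 0)
  have est : ∀ g : EuclideanSpace ℝ (Fin n) → ℝ, (∀ x, |g x| ≤ M) → ∀ tau, 0 < tau → ∀ x,
      0 ≤ upperT tau (lowerT lam g) x - lowerT lam g x ∧
        upperT tau (lowerT lam g) x - lowerT lam g x ≤ 16 * M * lam / tau := by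
    intro g hg tau htau x
    obtain ⟨hlow, hupp⟩ := upperT_lowerT_mem_Icc (fun y => neg_le_of_abs_le (hg y))
      (fun y => le_of_abs_le (hg y)) hlam htau x
    have : (M - -M) * lam / tau ≤ 16 * M * lam / tau := by gcongr; linarith
    constructor <;> linarith
  have hneg : ∀ x, |-f x| ≤ M := fun x => (abs_neg (f x)).trans_le (hf x)
  refine ⟨fun tau htau x => ⟨est f hf tau htau x, ?_⟩, ?_⟩
  · rw [funext (upperT_eq_neg_lowerT_neg lam f), lowerT_neg]
    simp only [sub_neg_eq_add, neg_add_eq_sub]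
    exact est _ hneg tau htau x
  · refine tendstoUniformly_of_dist_le (r := fun tau => 16 * M * lam / tau)
      (tendsto_const_nhds.div_atTop Filter.tendsto_id)
      ((Filter.eventually_gt_atTop 0).mono fun tau htau x => ?_)
    obtain ⟨hlow, hupp⟩ := est f hf tau htau x
    rw [Real.dist_eq, abs_sub_comm, abs_of_nonneg hlow]
    exact hupp

/-- Estimates for the mixed compensated convex transforms of a bounded function,
and uniform convergence of `C^u_τ(C^l_λ(f))` to `C^l_λ(f)` as `τ → ∞`. -/
theorem mixed_transform_estimates (n : ℕ) (hn : 1 ≤ n)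
    (f : EuclideanSpace ℝ (Fin n) → ℝ) (M : ℝ) (hM : 0 < M) (hf : ∀ x, |f x| ≤ M)
    (lam : ℝ) (hlam : 0 < lam) :
    (∀ tau : ℝ, 0 < tau → ∀ x,
      (0 ≤ upperT tau (lowerT lam f) x - lowerT lam f x ∧
        upperT tau (lowerT lam f) x - lowerT lam f x ≤ 16 * M * lam / tau) ∧
      (0 ≤ upperT lam f x - lowerT tau (fun y => upperT lam f y) x ∧
        upperT lam f x - lowerT tau (fun y => upperT lam f y) x ≤ 16 * M * lam / tau)) ∧
    TendstoUniformly (fun (tau : ℝ) (x : EuclideanSpace ℝ (Fin n)) =>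
        upperT tau (lowerT lam f) x)
      (fun x => lowerT lam f x) Filter.atTop :=
  mixed_transform_estimates_general n f M hf lam hlam
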